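/- Let H₁, H₂ be Hilbert spaces and T : H₁ → H₂ an injective bounded linear map. Suppose there exist a Banach space X, a compact embedding ι : H₁ → X, and a constant C₀ such that ‖f‖_{H₁} ≤ C₀‖Tf‖_{H₂} + C₀‖ι f‖_X for all f ∈ H₁. Then there exists C > 0 such that ‖f‖_{H₁} ≤ C‖Tf‖_{H₂} for all f ∈ H₁. -/
import Mathlib

private lemma cauchySeq_of_dist_le' {α β : Type*} [PseudoMetricSpace α] [PseudoMetricSpace β]
    {v : ℕ → α} {w : ℕ → β} {K : ℝ} (hK : 0 ≤ K)
    (h : ∀ m n, dist (v m) (v n) ≤ K * dist (w m) (w n)) (hw : CauchySeq w) :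
    CauchySeq v := by
  rw [Metric.cauchySeq_iff] at hw ⊢
  intro ε hε
  obtain ⟨N, hN⟩ := hw (ε / (K + 1)) (by positivity)
  refine ⟨N, fun m hm n hn => lt_of_le_of_lt (h m n) ?_⟩
  have h1 := hN m hm n hn
  have h2 : K * dist (w m) (w n) ≤ K * (ε / (K + 1)) :=
    mul_le_mul_of_nonneg_left h1.le hK
  have h3 : K * (ε / (K + 1)) < ε := by
    rw [← mul_div_assoc, div_lt_iff₀ (by positivity)]
    nlinarith
  linarith

/-- Compactness–uniqueness argument: an observability estimate with a compact
remainder term self-improves to one without remainder, provided `T` is injective. -/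
theorem compactness_uniqueness
    {H₁ H₂ X : Type*}
    [NormedAddCommGroup H₁] [InnerProductSpace ℝ H₁] [CompleteSpace H₁]
    [NormedAddCommGroup H₂] [InnerProductSpace ℝ H₂] [CompleteSpace H₂]
    [NormedAddCommGroup X] [NormedSpace ℝ X] [CompleteSpace X]
    (T : H₁ →L[ℝ] H₂) (hT : Function.Injective T)
    (ι : H₁ →L[ℝ] X) (hι : IsCompactOperator ι)
    (C₀ : ℝ) (hest : ∀ f : H₁, ‖f‖ ≤ C₀ * ‖T f‖ + C₀ * ‖ι f‖) :
    ∃ C > 0, ∀ f : H₁, ‖f‖ ≤ C * ‖T f‖ := by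
  by_contra hcon
  push_neg at hcon
  -- build a normalized sequence with ‖T (u n)‖ ≤ 1/(n+1)
  have hch : ∀ n : ℕ, ∃ g : H₁, ((n : ℝ) + 1) * ‖T g‖ < ‖g‖ := by
    intro n
    obtain ⟨g, hg⟩ := hcon ((n : ℝ) + 1) (by positivity)
    exact ⟨g, hg⟩
  choose g hg using hch
  have hgne : ∀ n, ‖g n‖ ≠ 0 := by
    intro n h0
    have := hg n
    rw [h0] at this
    nlinarith [norm_nonneg (T (g n)), (by positivity : (0:ℝ) < (n:ℝ)+1)]
  set u : ℕ → H₁ := fun n => ‖g n‖⁻¹ • g n with hu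
  have hunorm : ∀ n, ‖u n‖ = 1 := by
    intro n
    simp [hu, norm_smul, inv_mul_cancel₀ (hgne n)]
  have huT : ∀ n, ‖T (u n)‖ ≤ 1 / ((n : ℝ) + 1) := by
    intro n
    have hgpos : 0 < ‖g n‖ := lt_of_le_of_ne (norm_nonneg _) (Ne.symm (hgne n))
    have : ‖T (u n)‖ = ‖g n‖⁻¹ * ‖T (g n)‖ := by
      simp [hu, map_smul, norm_smul, abs_of_nonneg (inv_nonneg.2 hgpos.le)]
    rw [this, inv_mul_le_iff₀ hgpos, mul_one_div, le_div_iff₀ (by positivity)]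
    nlinarith [hg n]
  -- u is bounded, so ι ∘ u has a convergent subsequence
  have hball : ∀ n, u n ∈ Metric.closedBall (0 : H₁) 1 := by
    intro n
    simp [Metric.mem_closedBall, dist_zero_right, hunorm n]
  have hK : IsCompact (closure (ι '' Metric.closedBall (0 : H₁) 1)) :=
    hι.isCompact_closure_image_of_bounded Metric.isBounded_closedBall
  have hmem : ∀ n, ι (u n) ∈ closure (ι '' Metric.closedBall (0 : H₁) 1) :=
    fun n => subset_closure ⟨u n, hball n, rfl⟩
  obtain ⟨x, -, φ, hφ, hx⟩ := hK.tendsto_subseq hmem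
  set v : ℕ → H₁ := fun n => u (φ n) with hv
  -- T v → 0
  have hTv : Filter.Tendsto (fun n => T (v n)) Filter.atTop (nhds 0) := by
    rw [tendsto_zero_iff_norm_tendsto_zero]
    apply squeeze_zero (fun n => norm_nonneg _) (fun n => ?_)
      tendsto_one_div_add_atTop_nhds_zero_nat
    calc ‖T (v n)‖ ≤ 1 / ((φ n : ℝ) + 1) := huT (φ n)
      _ ≤ 1 / ((n : ℝ) + 1) := by
          apply div_le_div_of_nonneg_left one_pos.le (by positivity)
          have h : (n : ℝ) ≤ (φ n : ℝ) := Nat.cast_le.mpr hφ.le_apply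
          linarith
  -- the pair sequence converges, hence is Cauchy
  set w : ℕ → H₂ × X := fun n => (T (v n), ι (v n)) with hw
  have hwc : CauchySeq w := (hTv.prodMk_nhds hx).cauchySeq
  -- v is Cauchy via the estimate
  set C₁ : ℝ := max C₀ 0 with hC₁
  have hC₁0 : 0 ≤ C₁ := le_max_right _ _
  have hvC : CauchySeq v := by
    apply cauchySeq_of_dist_le' (K := 2 * C₁) (by positivity) ?_ hwc
    intro m n
    have h1 := hest (v m - v n)
    have hTd : ‖T (v m - v n)‖ = dist (T (v m)) (T (v n)) := by
      rw [dist_eq_norm, map_sub]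
    have hid : ‖ι (v m - v n)‖ = dist (ι (v m)) (ι (v n)) := by
      rw [dist_eq_norm, map_sub]
    rw [dist_eq_norm]
    have hd1 : dist (T (v m)) (T (v n)) ≤ dist (w m) (w n) := by
      rw [Prod.dist_eq]; exact le_max_left _ _
    have hd2 : dist (ι (v m)) (ι (v n)) ≤ dist (w m) (w n) := by
      rw [Prod.dist_eq]; exact le_max_right _ _
    have hc0 : C₀ ≤ C₁ := le_max_left _ _
    have hn1 : (0:ℝ) ≤ ‖T (v m - v n)‖ := norm_nonneg _
    have hn2 : (0:ℝ) ≤ ‖ι (v m - v n)‖ := norm_nonneg _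
    calc ‖v m - v n‖ ≤ C₀ * ‖T (v m - v n)‖ + C₀ * ‖ι (v m - v n)‖ := h1
      _ ≤ C₁ * ‖T (v m - v n)‖ + C₁ * ‖ι (v m - v n)‖ := by
          nlinarith
      _ ≤ 2 * C₁ * dist (w m) (w n) := by
          rw [hTd, hid]; nlinarith
  obtain ⟨f, hf⟩ := cauchySeq_tendsto_of_complete hvC
  -- T f = 0
  have hTf : T f = 0 :=
    tendsto_nhds_unique ((T.continuous.tendsto f).comp hf) hTv
  have hf0 : f = 0 := hT (by rw [hTf, map_zero])
  -- but ‖f‖ = 1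
  have hnf : ‖f‖ = 1 := by
    have h1 : Filter.Tendsto (fun n => ‖v n‖) Filter.atTop (nhds ‖f‖) :=
      (continuous_norm.tendsto f).comp hf
    have h2 : (fun n => ‖v n‖) = fun _ => (1:ℝ) := funext fun n => hunorm (φ n)
    rw [h2] at h1
    exact (tendsto_const_nhds_iff.mp h1).symm
  rw [hf0, norm_zero] at hnf
  norm_num at hnf
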